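/- Let κ : ℝⁿ → ℝⁿ be linear with κ² = 1 and A invertible with κA = Aᵗκᵗ. Then the pullback κ* on forms and the twisted Hodge operators satisfy κ* ∘ *^{Aᵗ} = (det κ) · *^A ∘ κ* on l-forms. -/

import Mathlib

/-!
Testing the defining identity of a twisted Hodge operator `*^B` against the basis form `dx_T`
gives the closed formula `(*^B μ)_{Tᶜ} = ε_T (∧ˡBᵗ μ)_T`, where `ε_T` is the sign of the shuffle
putting `T` before `Tᶜ`. Evaluated at `Yᶜ`, the left-hand side `κ*(*^{Aᵗ} μ)` becomes a sum of
complementary minors `κ[Wᶜ, Yᶜ]`; Jacobi's identity for the involution `κ` turns these into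
`det κ · ε_W ε_Y · κ[Y, W]`, leaving `ε_Y det κ · (∧ˡ(κA) μ)_Y`. By Cauchy–Binet `∧ˡ` is
multiplicative, and `κA = Aᵗκᵗ` identifies this with `det κ · (*^A κ* μ)_{Yᶜ}`.
-/

open Finset

noncomputable section

abbrev FormIdx (n k : ℕ) := {s : Finset (Fin n) // s.card = k}

abbrev KForm (n k : ℕ) := FormIdx n k → ℝ

def subEmb {n k : ℕ} (S : FormIdx n k) : Fin k → Fin n := fun j => (S.1.orderIsoOfFin S.2 j : Fin n)

/-- the bilinear pairing `(ω|μ)_A = ⟨(∧ˡA)ω, μ⟩` -/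
def pairingA {n k : ℕ} (A : Matrix (Fin n) (Fin n) ℝ) (u v : KForm n k) : ℝ :=
  ∑ T : FormIdx n k, ∑ S : FormIdx n k,
    (A.submatrix (subEmb S) (subEmb T)).det * u T * v S

/-- the linear map on `k`-forms induced by a matrix acting on covectors
(e.g. `formMap Aᵀ = ∧ᵏ(ι⁻¹Aᵗ)`) -/
def formMap {n k : ℕ} (B : Matrix (Fin n) (Fin n) ℝ) (u : KForm n k) : KForm n k :=
  fun S => ∑ T : FormIdx n k, (B.submatrix (subEmb S) (subEmb T)).det * u T

/-- sign of the shuffle putting the block `t` before the block `s` -/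
def shuffleSign {n : ℕ} (t s : Finset (Fin n)) : ℝ :=
  (-1 : ℝ) ^ (∑ x ∈ t, (s.filter (· < x)).card)

/-- exterior (wedge) product -/
def wedgeP {n k l : ℕ} (α : KForm n k) (β : KForm n l) : KForm n (k + l) :=
  fun S => ∑ T : FormIdx n k, if h : T.1 ⊆ S.1 then
    shuffleSign T.1 (S.1 \ T.1) * α T * β ⟨S.1 \ T.1, by
      rw [Finset.card_sdiff, Finset.inter_eq_left.mpr h, S.2, T.2]; omega⟩ else 0

/-- the coefficient of `dx₁∧⋯∧dxₙ` of a top-degree form (zero unless `m = n`) -/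
def topCoeff {n m : ℕ} (v : KForm n m) : ℝ :=
  if h : m = n then v ⟨Finset.univ, by subst h; simp⟩ else 0

/-- the standard Euclidean Hodge star -/
def hodgeStd {n l : ℕ} (hl : l ≤ n) (μ : KForm n l) : KForm n (n - l) :=
  fun S => shuffleSign S.1ᶜ S.1 * μ ⟨S.1ᶜ, by
    rw [Finset.card_compl, S.2, Fintype.card_fin]; omega⟩

/-- re-indexing of a form along an equality of degrees -/
def castForm {n m m' : ℕ} (h : m = m') (v : KForm n m) : KForm n m' :=
  fun S => v ⟨S.1, by rw [S.2, h]⟩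

theorem Int.cast_units_mul_self {R : Type*} [Ring R] (u : ℤˣ) : ((u : ℤ) : R) * u = 1 := by
  rw [← Int.cast_mul, ← Units.val_mul, Int.units_mul_self, Units.val_one, Int.cast_one]

namespace FormIdx

variable {n k l : ℕ}

theorem subEmb_strictMono (S : FormIdx n k) : StrictMono (subEmb S) :=
  fun _ _ h => (S.1.orderIsoOfFin S.2).strictMono h

theorem subEmb_injective (S : FormIdx n k) : Function.Injective (subEmb S) :=
  (subEmb_strictMono S).injective

theorem subEmb_mem (S : FormIdx n k) (i : Fin k) : subEmb S i ∈ S.1 :=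
  (S.1.orderIsoOfFin S.2 i).2

theorem range_subEmb (S : FormIdx n k) : Set.range (subEmb S) = S.1 := by
  ext x
  exact ⟨fun ⟨i, hi⟩ => hi ▸ subEmb_mem S i,
    fun hx => ⟨(S.1.orderIsoOfFin S.2).symm ⟨x, hx⟩, by simp [subEmb]⟩⟩

theorem exists_subEmb_eq (S : FormIdx n k) {x : Fin n} (hx : x ∈ S.1) :
    ∃ i, subEmb S i = x := by
  rw [← Finset.mem_coe, ← range_subEmb] at hx
  exact hx

def complEquiv (hl : l ≤ n) : FormIdx n l ≃ FormIdx n (n - l) where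
  toFun S := ⟨S.1ᶜ, by rw [card_compl, S.2, Fintype.card_fin]⟩
  invFun V := ⟨V.1ᶜ, by rw [card_compl, V.2, Fintype.card_fin]; omega⟩
  left_inv S := by simp
  right_inv V := by simp

theorem complEquiv_val (hl : l ≤ n) (S : FormIdx n l) : (complEquiv hl S).1 = S.1ᶜ := rfl

def sumEquiv (hl : l ≤ n) (S : FormIdx n l) : Fin l ⊕ Fin (n - l) ≃ Fin n :=
  ((S.1.orderIsoOfFin S.2).toEquiv.sumCongr
      (((complEquiv hl S).1.orderIsoOfFin (complEquiv hl S).2).toEquiv.trans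
        (Equiv.subtypeEquivRight fun _ => mem_compl))).trans
    (Equiv.sumCompl (· ∈ S.1))

theorem sumEquiv_inl (hl : l ≤ n) (S : FormIdx n l) (a : Fin l) :
    sumEquiv hl S (.inl a) = subEmb S a := rfl

theorem sumEquiv_inr (hl : l ≤ n) (S : FormIdx n l) (b : Fin (n - l)) :
    sumEquiv hl S (.inr b) = subEmb (complEquiv hl S) b := rfl

def splitEquiv (hl : l ≤ n) : Fin l ⊕ Fin (n - l) ≃ Fin n :=
  finSumFinEquiv.trans (finCongr (by omega))

def shufflePerm (hl : l ≤ n) (S : FormIdx n l) : Equiv.Perm (Fin n) :=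
  (splitEquiv hl).symm.trans (sumEquiv hl S)

theorem shufflePerm_symm_subEmb (hl : l ≤ n) (S : FormIdx n l) (a : Fin l) :
    ((shufflePerm hl S).symm (subEmb S a) : ℕ) = a := by
  rw [← sumEquiv_inl hl S a, shufflePerm, Equiv.symm_trans_apply,
    Equiv.symm_apply_apply, Equiv.symm_symm]
  simp [splitEquiv]

theorem shufflePerm_symm_subEmb_compl (hl : l ≤ n) (S : FormIdx n l) (b : Fin (n - l)) :
    ((shufflePerm hl S).symm (subEmb (complEquiv hl S) b) : ℕ) = l + b := by
  rw [← sumEquiv_inr hl S b, shufflePerm, Equiv.symm_trans_apply,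
    Equiv.symm_apply_apply, Equiv.symm_symm]
  simp [splitEquiv]

theorem shufflePerm_symm_lt_iff (hl : l ≤ n) (S : FormIdx n l) {x y : Fin n} (hxy : x < y) :
    (shufflePerm hl S).symm x < (shufflePerm hl S).symm y ↔ x ∈ S.1 ∨ y ∉ S.1 := by
  have hcases : ∀ z : Fin n,
      (∃ a, subEmb S a = z) ∨ (∃ b, subEmb (complEquiv hl S) b = z) :=
    fun z => (em (z ∈ S.1)).imp (exists_subEmb_eq S) fun h =>
      exists_subEmb_eq (complEquiv hl S) (mem_compl.2 h)
  have hS := subEmb_mem S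
  have hSc : ∀ b, subEmb (complEquiv hl S) b ∉ S.1 := fun b => mem_compl.1 (subEmb_mem _ b)
  rcases hcases x with ⟨a, rfl⟩ | ⟨a, rfl⟩ <;>
    rcases hcases y with ⟨b, rfl⟩ | ⟨b, rfl⟩ <;>
    simp only [Fin.lt_def, shufflePerm_symm_subEmb, shufflePerm_symm_subEmb_compl, hS, hSc,
      or_true, not_true, or_false, not_false_iff, iff_true, iff_false]
  · exact (subEmb_strictMono S).lt_iff_lt.1 hxy
  · omega
  · omega
  · exact Nat.add_lt_add_left ((subEmb_strictMono _).lt_iff_lt.1 hxy) l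

theorem sign_shufflePerm (hl : l ≤ n) (S : FormIdx n l) :
    Equiv.Perm.sign (shufflePerm hl S) = (-1) ^ ∑ x ∈ S.1, #(S.1ᶜ.filter (· < x)) := by
  rw [← Equiv.Perm.sign_inv, Equiv.Perm.sign_eq_prod_prod_Iio, ← prod_pow_eq_pow_sum]
  simp only [Equiv.Perm.inv_def]
  refine (prod_subset (subset_univ _) fun y _ hy => ?_).symm.trans (prod_congr rfl fun y hy => ?_)
  · refine prod_eq_one fun x hx => ?_
    rw [if_pos ((shufflePerm_symm_lt_iff hl S (mem_Iio.1 hx)).2 (.inr hy))]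
  · rw [prod_congr rfl fun x hx =>
      if_congr (shufflePerm_symm_lt_iff hl S (mem_Iio.1 hx)) rfl rfl]
    rw [prod_ite, prod_const_one, one_mul, prod_const]
    congr 2
    ext x
    simp [hy, and_comm]

theorem subEmb_comp_perm_injective :
    Function.Injective fun x : (Σ _ : FormIdx n k, Equiv.Perm (Fin k)) => subEmb x.1 ∘ x.2 := by
  rintro ⟨T, π⟩ ⟨T', π'⟩ h
  have hT : T = T' := by
    have := congrArg Set.range h
    simp only [π.surjective.range_comp, π'.surjective.range_comp, range_subEmb] at this
    exact Subtype.ext (Finset.coe_inj.1 this)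
  subst hT
  have hπ : π = π' := Equiv.ext fun i => subEmb_injective T (congrFun h i)
  rw [hπ]

theorem exists_subEmb_comp_perm_eq {f : Fin k → Fin n} (hf : Function.Injective f) :
    ∃ x : (Σ _ : FormIdx n k, Equiv.Perm (Fin k)), subEmb x.1 ∘ x.2 = f := by
  let T : FormIdx n k := ⟨univ.image f, by rw [card_image_of_injective _ hf, card_fin]⟩
  have hmem : ∀ i, f i ∈ T.1 := fun i => mem_image_of_mem f (mem_univ i)
  let π : Fin k → Fin k := fun i => (T.1.orderIsoOfFin T.2).symm ⟨f i, hmem i⟩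
  have hπ : Function.Injective π := fun i j h => hf <| by
    simpa [π] using congrArg (fun z => (T.1.orderIsoOfFin T.2 z : Fin n)) h
  exact ⟨⟨T, .ofBijective π hπ.bijective_of_finite⟩, funext fun i => by simp [subEmb, π]⟩

end FormIdx

open FormIdx

namespace Matrix

variable {R : Type*} [CommRing R] {n k l : ℕ}

theorem det_mul_eq_sum_prod_mul_det_submatrix (M : Matrix (Fin k) (Fin n) R)
    (N : Matrix (Fin n) (Fin k) R) :
    (M * N).det = ∑ f : Fin k → Fin n, (∏ i, M i (f i)) * (N.submatrix f id).det := by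
  let D : MultilinearMap R (fun _ : Fin k => Fin k → R) R :=
    detRowAlternating.toMultilinearMap
  have hrows : (M * N).det = D fun i => ∑ j, M i j • (N j : Fin k → R) := by
    congr 1
    ext i x
    simp [mul_apply, Finset.sum_apply]
  rw [hrows, D.map_sum]
  exact sum_congr rfl fun f _ => D.map_smul_univ _ _

/-- Cauchy–Binet formula. -/
theorem det_mul_eq_sum_det_mul_det (M : Matrix (Fin k) (Fin n) R)
    (N : Matrix (Fin n) (Fin k) R) :
    (M * N).det = ∑ T : FormIdx n k,
      (M.submatrix id (subEmb T)).det * (N.submatrix (subEmb T) id).det := by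
  have hzero : ∀ f : Fin k → Fin n, ¬ Function.Injective f → (N.submatrix f id).det = 0 := by
    intro f hf
    obtain ⟨i, j, hij, hne⟩ : ∃ i j, f i = f j ∧ i ≠ j := by
      simpa [Function.Injective] using hf
    exact det_zero_of_row_eq hne (funext fun x => by simp [hij])
  have hperm : ∀ (T : FormIdx n k) (π : Equiv.Perm (Fin k)),
      (N.submatrix (subEmb T ∘ π) id).det = π.sign * (N.submatrix (subEmb T) id).det :=
    fun T π => det_permute π (N.submatrix (subEmb T) id)
  have hcols : ∀ T : FormIdx n k, (M.submatrix id (subEmb T)).det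
      = ∑ π : Equiv.Perm (Fin k), π.sign * ∏ i, M i (subEmb T (π i)) := by
    intro T
    rw [← det_transpose, det_apply']
    rfl
  calc (M * N).det
      = ∑ f : Fin k → Fin n, (∏ i, M i (f i)) * (N.submatrix f id).det :=
        det_mul_eq_sum_prod_mul_det_submatrix M N
    -- only injective `f` contribute, and each factors uniquely as `subEmb T ∘ π`
    _ = ∑ x : (Σ _ : FormIdx n k, Equiv.Perm (Fin k)),
          (∏ i, M i (subEmb x.1 (x.2 i))) * (N.submatrix (subEmb x.1 ∘ x.2) id).det := by
        refine (sum_of_injOn _ subEmb_comp_perm_injective.injOn (fun _ _ => mem_coe.2 (mem_univ _))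
          (fun f _ hf => ?_) fun _ _ => rfl).symm
        rw [hzero f fun hinj => hf ?_, mul_zero]
        obtain ⟨x, hx⟩ := exists_subEmb_comp_perm_eq hinj
        exact ⟨x, by simp, hx⟩
    _ = ∑ T : FormIdx n k, (M.submatrix id (subEmb T)).det * (N.submatrix (subEmb T) id).det := by
        simp only [Fintype.sum_sigma, hperm, hcols, sum_mul]
        refine sum_congr rfl fun T _ => sum_congr rfl fun π _ => ?_
        ring

def minor (B : Matrix (Fin n) (Fin n) R) (S T : FormIdx n k) : R :=
  (B.submatrix (subEmb S) (subEmb T)).det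

theorem minor_transpose (B : Matrix (Fin n) (Fin n) R) (S T : FormIdx n k) :
    Bᵀ.minor S T = B.minor T S :=
  det_transpose (B.submatrix (subEmb T) (subEmb S))

theorem minor_mul (B C : Matrix (Fin n) (Fin n) R) (S U : FormIdx n k) :
    (B * C).minor S U = ∑ T, B.minor S T * C.minor T U := by
  have h : (B * C).submatrix (subEmb S) (subEmb U)
      = B.submatrix (subEmb S) id * C.submatrix id (subEmb U) := by
    ext i j
    simp [mul_apply]
  rw [minor, h, det_mul_eq_sum_det_mul_det]
  rfl

theorem submatrix_one_complEquiv_left (hl : l ≤ n) (S : FormIdx n l) :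
    (1 : Matrix (Fin n) (Fin n) R).submatrix (subEmb (complEquiv hl S)) (subEmb S) = 0 := by
  ext b a
  refine one_apply_ne fun h => ?_
  have := subEmb_mem (complEquiv hl S) b
  rw [h, complEquiv_val, mem_compl] at this
  exact this (subEmb_mem S a)

theorem submatrix_one_complEquiv_right (hl : l ≤ n) (S : FormIdx n l) :
    (1 : Matrix (Fin n) (Fin n) R).submatrix (subEmb S) (subEmb (complEquiv hl S)) = 0 := by
  rw [← transpose_one, ← transpose_submatrix, submatrix_one_complEquiv_left, transpose_zero]

theorem det_submatrix_sumEquiv (hl : l ≤ n) (κ : Matrix (Fin n) (Fin n) R) (Y W : FormIdx n l) :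
    (κ.submatrix (sumEquiv hl Y) (sumEquiv hl W)).det
      = (shufflePerm hl Y).sign * (shufflePerm hl W).sign * κ.det := by
  have h : κ.submatrix (sumEquiv hl Y) (sumEquiv hl W)
      = (κ.submatrix (shufflePerm hl Y * (shufflePerm hl W)⁻¹) id).submatrix
          (sumEquiv hl W) (sumEquiv hl W) := by
    ext s t
    simp [shufflePerm, Equiv.Perm.inv_def]
  rw [h, det_submatrix_equiv_self, det_permute, Equiv.Perm.sign_mul, Equiv.Perm.sign_inv]
  push_cast
  ring

/-- Jacobi's complementary-minor identity. With `N = [e_W | κ'_{·,Yᶜ}]` one has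
`κ N = [κ_{·,W} | e_{Yᶜ}]`, and both become block triangular once their rows are ordered as
`W, Wᶜ` and `Y, Yᶜ` respectively. -/
theorem minor_eq_sign_mul_det_mul_minor_complEquiv (hl : l ≤ n)
    {κ κ' : Matrix (Fin n) (Fin n) R} (h : κ * κ' = 1) (W Y : FormIdx n l) :
    κ.minor Y W = (shufflePerm hl Y).sign * (shufflePerm hl W).sign * κ.det
      * κ'.minor (complEquiv hl W) (complEquiv hl Y) := by
  let N : Matrix (Fin n) (Fin l ⊕ Fin (n - l)) R :=
    fromCols ((1 : Matrix (Fin n) (Fin n) R).submatrix id (subEmb W))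
      (κ'.submatrix id (subEmb (complEquiv hl Y)))
  have hN : N.submatrix (sumEquiv hl W) id
      = fromBlocks 1 (κ'.submatrix (subEmb W) (subEmb (complEquiv hl Y))) 0
          (κ'.submatrix (subEmb (complEquiv hl W)) (subEmb (complEquiv hl Y))) := by
    rw [← submatrix_one (subEmb W) (subEmb_injective W), ← submatrix_one_complEquiv_left hl W]
    ext (s | s) (t | t) <;> rfl
  have hκN : (κ * N).submatrix (sumEquiv hl Y) id
      = fromBlocks (κ.submatrix (subEmb Y) (subEmb W)) 0
          (κ.submatrix (subEmb (complEquiv hl Y)) (subEmb W)) 1 := by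
    have hcols : κ * N = fromCols (κ.submatrix id (subEmb W))
        ((1 : Matrix (Fin n) (Fin n) R).submatrix id (subEmb (complEquiv hl Y))) := by
      have hsub : ∀ (B : Matrix (Fin n) (Fin n) R) {m : ℕ} (f : Fin m → Fin n),
          κ * B.submatrix id f = (κ * B).submatrix id f := fun _ _ _ => rfl
      rw [mul_fromCols, hsub, hsub, mul_one, h]
    rw [hcols, ← submatrix_one _ (subEmb_injective (complEquiv hl Y)),
      ← submatrix_one_complEquiv_right hl Y]
    ext (s | s) (t | t) <;> rfl
  calc κ.minor Y W = ((κ * N).submatrix (sumEquiv hl Y) id).det := by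
        rw [hκN, det_fromBlocks_zero₁₂, det_one, mul_one]
        rfl
    _ = (κ.submatrix (sumEquiv hl Y) (sumEquiv hl W)).det
          * (N.submatrix (sumEquiv hl W) id).det := by
        rw [← det_mul, submatrix_mul_equiv]
    _ = _ := by
        rw [det_submatrix_sumEquiv, hN, det_fromBlocks_zero₂₁, det_one, one_mul]
        rfl

theorem sign_mul_minor_complEquiv_of_mul_self
    (hl : l ≤ n) {κ : Matrix (Fin n) (Fin n) R} (hκ : κ * κ = 1) (W Y : FormIdx n l) :
    (shufflePerm hl W).sign * κ.minor (complEquiv hl W) (complEquiv hl Y)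
      = κ.det * ((shufflePerm hl Y).sign * κ.minor Y W) := by
  have hdet : κ.det * κ.det = 1 := by rw [← det_mul, hκ, det_one]
  rw [minor_eq_sign_mul_det_mul_minor_complEquiv hl hκ W Y]
  linear_combination
    (-((shufflePerm hl W).sign * κ.minor (complEquiv hl W) (complEquiv hl Y))) *
      ((((shufflePerm hl Y).sign : ℤ) : R) * (shufflePerm hl Y).sign * hdet
        + Int.cast_units_mul_self (R := R) (shufflePerm hl Y).sign)

end Matrix

open scoped Matrix

section Forms
variable {n k l : ℕ}

theorem formMap_apply (B : Matrix (Fin n) (Fin n) ℝ) (u : KForm n k) (S : FormIdx n k) :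
    formMap B u S = ∑ T, B.minor S T * u T := rfl

theorem formMap_mul (B C : Matrix (Fin n) (Fin n) ℝ) (u : KForm n k) :
    formMap (B * C) u = formMap B (formMap C u) := by
  funext S
  simp only [formMap_apply, Matrix.minor_mul, sum_mul, mul_sum, mul_assoc]
  exact sum_comm

theorem pairingA_single (B : Matrix (Fin n) (Fin n) ℝ) (T : FormIdx n k) (μ : KForm n k) :
    pairingA B (Pi.single T 1) μ = formMap Bᵀ μ T := by
  simp only [formMap_apply, Matrix.minor_transpose]
  simp [pairingA, Pi.single_apply, Matrix.minor]

theorem topCoeff_wedgeP (hl : l ≤ n) (ω : KForm n l) (ν : KForm n (n - l)) :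
    topCoeff (wedgeP ω ν)
      = ∑ T, ((shufflePerm hl T).sign : ℝ) * ω T * ν (complEquiv hl T) := by
  rw [topCoeff, dif_pos (by omega)]
  refine sum_congr rfl fun T _ => ?_
  rw [dif_pos (subset_univ _), sign_shufflePerm]
  simp only [← compl_eq_univ_sdiff, shuffleSign]
  push_cast
  rfl

theorem apply_complEquiv_of_topCoeff_wedgeP (hl : l ≤ n) (B : Matrix (Fin n) (Fin n) ℝ)
    (star : KForm n l → KForm n (n - l))
    (hstar : ∀ ω μ, topCoeff (wedgeP ω (star μ)) = pairingA B ω μ) (μ : KForm n l)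
    (T : FormIdx n l) :
    star μ (complEquiv hl T) = (shufflePerm hl T).sign * formMap Bᵀ μ T := by
  have h := hstar (Pi.single T 1) μ
  rw [topCoeff_wedgeP hl, pairingA_single] at h
  simp only [Pi.single_apply, mul_ite, mul_one, mul_zero, ite_mul, zero_mul, sum_ite_eq', mem_univ,
    if_true] at h
  rw [← h, ← mul_assoc, Int.cast_units_mul_self, one_mul]

end Forms

theorem pullback_twisted_hodge_general {n l : ℕ} (hl : l ≤ n)
    (κ A : Matrix (Fin n) (Fin n) ℝ)
    (hκ : κ * κ = 1) (hcomm : κ * A = A.transpose * κ.transpose)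
    (starA : KForm n l → KForm n (n - l))
    (starAt : KForm n l → KForm n (n - l))
    (hsA : ∀ ω μ : KForm n l, topCoeff (wedgeP ω (starA μ)) = pairingA A ω μ)
    (hsAt : ∀ ω μ : KForm n l,
      topCoeff (wedgeP ω (starAt μ)) = pairingA A.transpose ω μ) :
    ∀ μ : KForm n l,
      formMap κ.transpose (starAt μ) = κ.det • starA (formMap κ.transpose μ) := by
  intro μ
  funext V
  obtain ⟨Y, rfl⟩ := (complEquiv hl).surjective V
  calc formMap κᵀ (starAt μ) (complEquiv hl Y)
      = ∑ W, κᵀ.minor (complEquiv hl Y) (complEquiv hl W) * starAt μ (complEquiv hl W) :=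
        ((complEquiv hl).sum_comp _).symm
    _ = ∑ W, (shufflePerm hl W).sign * κ.minor (complEquiv hl W) (complEquiv hl Y)
          * formMap A μ W := by
        simp only [apply_complEquiv_of_topCoeff_wedgeP hl _ starAt hsAt, Matrix.transpose_transpose,
          Matrix.minor_transpose, mul_left_comm, mul_assoc]
    _ = ∑ W, κ.det * ((shufflePerm hl Y).sign * κ.minor Y W) * formMap A μ W := by
        simp only [Matrix.sign_mul_minor_complEquiv_of_mul_self hl hκ]
    _ = κ.det * ((shufflePerm hl Y).sign * formMap κ (formMap A μ) Y) := by
        simp only [formMap_apply κ (formMap A μ) Y, mul_sum, mul_assoc]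
    _ = (κ.det • starA (formMap κᵀ μ)) (complEquiv hl Y) := by
        rw [← formMap_mul, hcomm, formMap_mul, Pi.smul_apply, smul_eq_mul,
          apply_complEquiv_of_topCoeff_wedgeP hl A starA hsA]

/-- If `κ² = 1` and `κA = Aᵗκᵗ`, then the pullback `κ* = ∧ˡκᵗ` on (constant-coefficient)
`l`-forms satisfies `κ* ∘ *^{Aᵗ} = (det κ) · *^A ∘ κ*`, the twisted Hodge operators being
characterized by `ω ∧ (*^B μ) = (ω|μ)_B dx` for `B = A, Aᵗ`. -/
theorem pullback_twisted_hodge {n l : ℕ} (hl : l ≤ n)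
    (κ A : Matrix (Fin n) (Fin n) ℝ)
    (hκ : κ * κ = 1) (hA : IsUnit A.det) (hcomm : κ * A = A.transpose * κ.transpose)
    (starA : KForm n l → KForm n (n - l))
    (starAt : KForm n l → KForm n (n - l))
    (hsA : ∀ ω μ : KForm n l, topCoeff (wedgeP ω (starA μ)) = pairingA A ω μ)
    (hsAt : ∀ ω μ : KForm n l,
      topCoeff (wedgeP ω (starAt μ)) = pairingA A.transpose ω μ) :
    ∀ μ : KForm n l,
      formMap κ.transpose (starAt μ) = κ.det • starA (formMap κ.transpose μ) :=
  pullback_twisted_hodge_general hl κ A hκ hcomm starA starAt hsA hsAt
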